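/- The quasi-shuffle product on the Q-vector space QSym_M spanned by words Z(α₁,...,α_k) in nonzero elements of a commutative monoid M — defined recursively by Z(α₁,...,α_k)·Z(β₁,...,β_l) = Z(α₁, (α₂..α_k)·Z(β₁..β_l)) + Z(β₁, Z(α₁..α_k)·(β₂..β_l)) + Z(α₁+β₁, (α₂..α_k)·(β₂..β_l)) — is associative. -/

import Mathlib

set_option linter.unusedSectionVars false

namespace QSym

variable {M : Type} [AddCommMonoid M]

/-- A word in the nonzero elements of the commutative monoid `M`: a basis element
`Z(α₁, …, α_k)` of `QSym_M`. -/
abbrev Word (M : Type) [AddCommMonoid M] := List {a : M // a ≠ 0}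

/-- `QSym_M`: the `ℚ`-vector space spanned by the words `Z(α₁, …, α_k)`. -/
abbrev QS (M : Type) [AddCommMonoid M] := Word M →₀ ℚ

variable (hM : ∀ a b : M, a ≠ 0 → b ≠ 0 → a + b ≠ 0)

/-- The quasi-shuffle product on basis words, defined recursively:
`Z(α₁,…,α_k)·Z(β₁,…,β_l) = Z(α₁, (α₂…α_k)·Z(β₁…β_l)) + Z(β₁, Z(α₁…α_k)·(β₂…β_l))
+ Z(α₁+β₁, (α₂…α_k)·(β₂…β_l))`. -/
noncomputable def qsh : Word M → Word M → QS M
  | [], w => Finsupp.single w 1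
  | v@(_ :: _), [] => Finsupp.single v 1
  | a :: as, b :: bs =>
      Finsupp.mapDomain (a :: ·) (qsh as (b :: bs))
        + Finsupp.mapDomain (b :: ·) (qsh (a :: as) bs)
        + Finsupp.mapDomain ((⟨a.1 + b.1, hM a.1 b.1 a.2 b.2⟩ : {x : M // x ≠ 0}) :: ·)
            (qsh as bs)
  termination_by v w => v.length + w.length

/-- The quasi-shuffle product on `QSym_M`, extended bilinearly from basis words. -/
noncomputable def qmul (f g : QS M) : QS M :=
  f.sum fun v c => g.sum fun w d => (c * d) • qsh hM v w

/-!
Extend the product bilinearly and consider the associator `A(f, g, h) = (fg)h - f(gh)`, which is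
trilinear, so it suffices that it vanishes on words. A word with an empty factor is trivial since
`Z()` is a two-sided unit. For nonempty words, applying the recursion twice on each side expresses
`A(a·u, b·v, c·w)` as a sum of seven terms, each a letter `a, b, c, a+b, a+c, b+c, a+b+c`
prepended to an associator of words of smaller total length (the triple sum arises on both sides,
bracketed differently, which is where associativity of `M` enters). Induction on the total length
finishes the proof.
-/

open Finsupp

def addNZ (a b : {x : M // x ≠ 0}) : {x : M // x ≠ 0} := ⟨a.1 + b.1, hM a.1 b.1 a.2 b.2⟩

theorem addNZ_assoc (a b c : {x : M // x ≠ 0}) :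
    addNZ hM (addNZ hM a b) c = addNZ hM a (addNZ hM b c) :=
  Subtype.ext (add_assoc _ _ _)

noncomputable def consₗ (a : {x : M // x ≠ 0}) : QS M →ₗ[ℚ] QS M := lmapDomain ℚ ℚ (a :: ·)

theorem consₗ_single (a : {x : M // x ≠ 0}) (w : Word M) (c : ℚ) :
    consₗ a (single w c) = single (a :: w) c := by
  simp [consₗ]

theorem qsh_nil_left (w : Word M) : qsh hM [] w = single w 1 := by rw [qsh]

theorem qsh_nil_right (v : Word M) : qsh hM v [] = single v 1 := by
  cases v <;> rw [qsh]

theorem qsh_cons_cons (a b : {x : M // x ≠ 0}) (as bs : Word M) :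
    qsh hM (a :: as) (b :: bs) =
      consₗ a (qsh hM as (b :: bs)) + consₗ b (qsh hM (a :: as) bs)
        + consₗ (addNZ hM a b) (qsh hM as bs) := by
  rw [qsh]; rfl

noncomputable def qmulₗ : QS M →ₗ[ℚ] QS M →ₗ[ℚ] QS M :=
  linearCombination ℚ fun v => linearCombination ℚ (qsh hM v)

theorem qmulₗ_single_single (v w : Word M) :
    qmulₗ hM (single v 1) (single w 1) = qsh hM v w := by
  simp [qmulₗ]

theorem qmul_eq_qmulₗ (f g : QS M) : qmul hM f g = qmulₗ hM f g := by
  simp [qmul, qmulₗ, linearCombination_apply, Finsupp.smul_sum, mul_smul]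

theorem qmulₗ_nil_left (f : QS M) : qmulₗ hM (single [] 1) f = f := by
  have : qmulₗ hM (single [] 1) = LinearMap.id := by
    ext w
    simp [qmulₗ, qsh_nil_left]
  rw [this, LinearMap.id_apply]

theorem qmulₗ_nil_right (f : QS M) : qmulₗ hM f (single [] 1) = f := by
  have : (qmulₗ hM).flip (single [] 1) = LinearMap.id := by
    ext w
    simp [qmulₗ, qsh_nil_right]
  rw [← LinearMap.flip_apply, this, LinearMap.id_apply]

theorem qmulₗ_consₗ_consₗ (a b : {x : M // x ≠ 0}) (f g : QS M) :
    qmulₗ hM (consₗ a f) (consₗ b g) =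
      consₗ a (qmulₗ hM f (consₗ b g)) + consₗ b (qmulₗ hM (consₗ a f) g)
        + consₗ (addNZ hM a b) (qmulₗ hM f g) := by
  have : (qmulₗ hM ∘ₗ consₗ a).compl₂ (consₗ b) =
      ((qmulₗ hM).compl₂ (consₗ b)).compr₂ (consₗ a) + (qmulₗ hM ∘ₗ consₗ a).compr₂ (consₗ b)
        + (qmulₗ hM).compr₂ (consₗ (addNZ hM a b)) := by
    ext v w
    simp [consₗ_single, qmulₗ_single_single, qsh_cons_cons]
  exact LinearMap.congr_fun₂ this f g

noncomputable def associator (f g h : QS M) : QS M :=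
  qmulₗ hM (qmulₗ hM f g) h - qmulₗ hM f (qmulₗ hM g h)

theorem associator_consₗ_consₗ_consₗ (a b c : {x : M // x ≠ 0}) (f g h : QS M) :
    associator hM (consₗ a f) (consₗ b g) (consₗ c h) =
      consₗ a (associator hM f (consₗ b g) (consₗ c h))
        + consₗ b (associator hM (consₗ a f) g (consₗ c h))
        + consₗ c (associator hM (consₗ a f) (consₗ b g) h)
        + consₗ (addNZ hM a b) (associator hM f g (consₗ c h))
        + consₗ (addNZ hM a c) (associator hM f (consₗ b g) h)
        + consₗ (addNZ hM b c) (associator hM (consₗ a f) g h)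
        + consₗ (addNZ hM a (addNZ hM b c)) (associator hM f g h) := by
  simp only [associator, qmulₗ_consₗ_consₗ, map_add, map_sub, LinearMap.add_apply,
    addNZ_assoc]
  abel

theorem associator_single : ∀ u v w : Word M,
    associator hM (single u 1) (single v 1) (single w 1) = 0
  | [], _, _ => by simp [associator, qmulₗ_nil_left]
  | _, [], _ => by simp [associator, qmulₗ_nil_left, qmulₗ_nil_right]
  | _, _, [] => by simp [associator, qmulₗ_nil_right]
  | a :: as, b :: bs, c :: cs => by
    rw [← consₗ_single a as, ← consₗ_single b bs, ← consₗ_single c cs,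
      associator_consₗ_consₗ_consₗ]
    simp only [consₗ_single, associator_single as (b :: bs) (c :: cs),
      associator_single (a :: as) bs (c :: cs), associator_single (a :: as) (b :: bs) cs,
      associator_single as bs (c :: cs), associator_single as (b :: bs) cs,
      associator_single (a :: as) bs cs, associator_single as bs cs, map_zero, add_zero]
  termination_by u v w => u.length + v.length + w.length

theorem qmulₗ_assoc (f g h : QS M) :
    qmulₗ hM (qmulₗ hM f g) h = qmulₗ hM f (qmulₗ hM g h) := by
  have : (qmulₗ hM).compr₂ (qmulₗ hM) =
      (LinearMap.llcomp ℚ (QS M) (QS M) (QS M) ∘ₗ qmulₗ hM).compl₂ (qmulₗ hM) := by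
    ext u v w x
    simpa using DFunLike.congr_fun (sub_eq_zero.mp (associator_single hM u v w)) x
  exact LinearMap.congr_fun (LinearMap.congr_fun₂ this f g) h

/-- The quasi-shuffle product on `QSym_M` is associative. -/
theorem qmul_assoc (f g h : QS M) :
    qmul hM (qmul hM f g) h = qmul hM f (qmul hM g h) := by
  simp only [qmul_eq_qmulₗ, qmulₗ_assoc]

end QSym
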